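/- arXiv:2307.00979 — 11 statements merged into one kernel-verified Lean document; each statement's English description precedes it below -/
import Mathlib

section
/- For an operator T : X ⇉ X*, the following are equivalent: (i) T is paramonotone and bimonotone; (ii) T is monotone and constant on its domain (i.e., T(x) = T(y) for all x, y ∈ dom T); (iii) (dom T − dom T) ⊥ (range T − range T) and gph T = dom T × range T. -/
/-- A set-valued operator `T : X ⇉ X*` is monotone. -/
def MonotoneOp {X : Type*} [NormedAddCommGroup X] [NormedSpace ℝ X]
    (T : X → Set (X →L[ℝ] ℝ)) : Prop :=
  ∀ ⦃x y : X⦄ ⦃xs ys : X →L[ℝ] ℝ⦄, xs ∈ T x → ys ∈ T y → 0 ≤ (xs - ys) (x - y)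

/-- A set-valued operator `T : X ⇉ X*` is paramonotone. -/
def ParamonotoneOp {X : Type*} [NormedAddCommGroup X] [NormedSpace ℝ X]
    (T : X → Set (X →L[ℝ] ℝ)) : Prop :=
  MonotoneOp T ∧ ∀ ⦃x y : X⦄ ⦃xs ys : X →L[ℝ] ℝ⦄, xs ∈ T x → ys ∈ T y →
    (xs - ys) (x - y) = 0 → ys ∈ T x ∧ xs ∈ T y

/-- `T` is bimonotone: both `T` and `-T` are monotone. -/
def BimonotoneOp {X : Type*} [NormedAddCommGroup X] [NormedSpace ℝ X]
    (T : X → Set (X →L[ℝ] ℝ)) : Prop :=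
  MonotoneOp T ∧ MonotoneOp (fun x => {s | -s ∈ T x})

/-- Domain of a set-valued operator. -/
def DomOp {X : Type*} [NormedAddCommGroup X] [NormedSpace ℝ X]
    (T : X → Set (X →L[ℝ] ℝ)) : Set X := {x | (T x).Nonempty}

/-- Range of a set-valued operator. -/
def RangeOp {X : Type*} [NormedAddCommGroup X] [NormedSpace ℝ X]
    (T : X → Set (X →L[ℝ] ℝ)) : Set (X →L[ℝ] ℝ) := ⋃ x, T x

private lemma neg_pairing {X : Type*} [NormedAddCommGroup X] [NormedSpace ℝ X]
    (a b : X →L[ℝ] ℝ) (z : X) : (a - b) z = -((b - a) z) := by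
  simp

theorem paramonotone_bimonotone_char {X : Type*} [NormedAddCommGroup X]
    [NormedSpace ℝ X] [CompleteSpace X] (T : X → Set (X →L[ℝ] ℝ)) :
    ((ParamonotoneOp T ∧ BimonotoneOp T) ↔
      (MonotoneOp T ∧ ∀ x ∈ DomOp T, ∀ y ∈ DomOp T, T x = T y)) ∧
    ((MonotoneOp T ∧ ∀ x ∈ DomOp T, ∀ y ∈ DomOp T, T x = T y) ↔
      ((∀ x ∈ DomOp T, ∀ y ∈ DomOp T, ∀ us ∈ RangeOp T, ∀ vs ∈ RangeOp T,
          (us - vs) (x - y) = 0) ∧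
        (∀ x xs, xs ∈ T x ↔ x ∈ DomOp T ∧ xs ∈ RangeOp T))) := by
  constructor
  · constructor
    · rintro ⟨⟨hmono, hpara⟩, _, hbi⟩
      refine ⟨hmono, ?_⟩
      rintro x ⟨xs, hxs⟩ y ⟨ys, hys⟩
      -- on the graph, pairings vanish
      have key : ∀ ⦃u v : X⦄ ⦃us vs : X →L[ℝ] ℝ⦄, us ∈ T u → vs ∈ T v →
          (us - vs) (u - v) = 0 := by
        intro u v us vs hu hv
        have h1 := hmono hu hv
        have h2 : (0:ℝ) ≤ ((-us) - (-vs)) (u - v) := by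
          have := hbi (x := u) (y := v) (xs := -us) (ys := -vs)
            (by simpa using hu) (by simpa using hv)
          simpa using this
        rw [show ((-us) - (-vs)) = (vs - us) by abel, neg_pairing] at h2
        linarith
      ext zs
      constructor
      · intro hz
        exact (hpara hz hys (key hz hys)).2
      · intro hz
        exact (hpara hxs hz (key hxs hz)).1
    · rintro ⟨hmono, hconst⟩
      have hrev : ∀ ⦃x y : X⦄ ⦃xs ys : X →L[ℝ] ℝ⦄, xs ∈ T x → ys ∈ T y →
          (xs - ys) (x - y) ≤ 0 := by
        intro x y xs ys hxs hys
        have hxy : T x = T y := hconst x ⟨xs, hxs⟩ y ⟨ys, hys⟩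
        have h := hmono (hxy ▸ hys) (hxy.symm ▸ hxs)
        rw [neg_pairing] at h
        linarith
      refine ⟨⟨hmono, ?_⟩, hmono, ?_⟩
      · intro x y xs ys hxs hys _
        have hxy : T x = T y := hconst x ⟨xs, hxs⟩ y ⟨ys, hys⟩
        exact ⟨hxy ▸ hys, hxy.symm ▸ hxs⟩
      · intro x y xs ys hxs hys
        have h := hrev (x := x) (y := y) (by simpa using hxs) (by simpa using hys)
        rw [show ((-xs:X →L[ℝ] ℝ) - -ys) = (ys - xs) by abel, neg_pairing] at h
        simpa using h
  · constructor
    · rintro ⟨hmono, hconst⟩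
      constructor
      · intro x hx y hy us hus vs hvs
        obtain ⟨a, ha⟩ := Set.mem_iUnion.1 hus
        obtain ⟨b, hb⟩ := Set.mem_iUnion.1 hvs
        have husx : us ∈ T x := (hconst a ⟨us, ha⟩ x hx) ▸ ha
        have hvsx : vs ∈ T x := (hconst b ⟨vs, hb⟩ x hx) ▸ hb
        have husy : us ∈ T y := (hconst a ⟨us, ha⟩ y hy) ▸ ha
        have hvsy : vs ∈ T y := (hconst b ⟨vs, hb⟩ y hy) ▸ hb
        have h1 := hmono husx hvsy
        have h2 := hmono hvsx husy
        rw [neg_pairing] at h2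
        linarith
      · intro x xs
        constructor
        · intro h
          exact ⟨⟨xs, h⟩, Set.mem_iUnion.2 ⟨x, h⟩⟩
        · rintro ⟨hx, hxs⟩
          obtain ⟨a, ha⟩ := Set.mem_iUnion.1 hxs
          exact (hconst a ⟨xs, ha⟩ x hx) ▸ ha
    · rintro ⟨horth, hgraph⟩
      have hmono : MonotoneOp T := by
        intro x y xs ys hxs hys
        have hx := (hgraph x xs).1 hxs
        have hy := (hgraph y ys).1 hys
        have := horth x hx.1 y hy.1 xs hx.2 ys hy.2
        linarith [this]
      refine ⟨hmono, ?_⟩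
      intro x hx y hy
      ext zs
      rw [hgraph x zs, hgraph y zs]
      tauto
end

section
/- Let T : X ⇉ X* be paramonotone and bimonotone. If dom T is dense in X, then T is single-valued (each T(x) has at most one element). -/
theorem dense_domain_single_valued {X : Type*} [NormedAddCommGroup X]
    [NormedSpace ℝ X] [CompleteSpace X] (T : X → Set (X →L[ℝ] ℝ))
    (hpara : ParamonotoneOp T) (hbi : BimonotoneOp T)
    (hdense : Dense {x | (T x).Nonempty}) :
    ∀ x, (T x).Subsingleton := by
  intro x xs hxs ys hys
  -- By bimonotonicity, for any graph pairs the pairing vanishes.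
  have flat : ∀ ⦃u v : X⦄ ⦃us vs : X →L[ℝ] ℝ⦄, us ∈ T u → vs ∈ T v →
      (us - vs) (u - v) = 0 := by
    intro u v us vs hu hv
    have h1 := hbi.1 hu hv
    have h2 := hbi.2 (show -us ∈ {s | -s ∈ T u} by simpa using hu)
      (show -vs ∈ {s | -s ∈ T v} by simpa using hv)
    have : (-us - -vs) (u - v) = -((us - vs) (u - v)) := by
      simp [ContinuousLinearMap.sub_apply]; ring
    rw [this] at h2
    linarith
  -- hence xs - ys is constant on the domain of T
  have const : ∀ y ∈ {z | (T z).Nonempty}, (xs - ys) y = (xs - ys) x := by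
    intro y hy
    obtain ⟨zs, hz⟩ := hy
    have e1 := flat hxs hz
    have e2 := flat hys hz
    simp only [ContinuousLinearMap.sub_apply, map_sub] at e1 e2 ⊢
    linarith
  -- density + continuity: constant everywhere
  have constAll : ∀ z : X, (xs - ys) z = (xs - ys) x := by
    have := Continuous.ext_on hdense (xs - ys).continuous continuous_const const
    intro z; exact congrFun this z
  have h0 : (xs - ys) x = 0 := by
    have := constAll 0
    simpa using this.symm
  have : ∀ z : X, (xs - ys) z = 0 := fun z => (constAll z).trans h0
  have hxy : xs - ys = 0 := ContinuousLinearMap.ext fun z => by simpa using this z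
  have := sub_eq_zero.mp hxy
  exact this
end

section
/- Let T_i : X ⇉ X*, i = 1,…,m, be paramonotone operators. Then each intersection operator T̃_i := T_i ∩ (−Σ_{j≠i} T_j) is monotone and constant on its domain, and its domain equals the common set A = {x ∈ X : 0 ∈ Σ_{j=1}^m T_j(x)}. -/
/-- Pointwise (Minkowski) sum of a finite family of set-valued operators over
an index set `s`. -/
def FamSum {X : Type*} [NormedAddCommGroup X] [NormedSpace ℝ X] {m : ℕ}
    (T : Fin m → X → Set (X →L[ℝ] ℝ)) (s : Finset (Fin m)) (x : X) :
    Set (X →L[ℝ] ℝ) :=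
  {v | ∃ f : Fin m → (X →L[ℝ] ℝ), (∀ j ∈ s, f j ∈ T j x) ∧ v = ∑ j ∈ s, f j}

/-- The intersection operator `T̃ᵢ = Tᵢ ∩ (−∑_{j≠i} Tⱼ)`. -/
def Ttilde {X : Type*} [NormedAddCommGroup X] [NormedSpace ℝ X] {m : ℕ}
    (T : Fin m → X → Set (X →L[ℝ] ℝ)) (i : Fin m) (x : X) :
    Set (X →L[ℝ] ℝ) :=
  T i x ∩ {v | -v ∈ FamSum T (Finset.univ \ {i}) x}

section Aux
variable {X : Type*} [NormedAddCommGroup X] [NormedSpace ℝ X] {m : ℕ}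

/-- Key lemma: all pairwise monotonicity pairings vanish. -/
lemma ttilde_key (T : Fin m → X → Set (X →L[ℝ] ℝ)) (hT : ∀ i, ParamonotoneOp (T i))
    (i : Fin m) {x y : X} {v w : X →L[ℝ] ℝ} {f g : Fin m → (X →L[ℝ] ℝ)}
    (hv : v ∈ T i x) (hw : w ∈ T i y)
    (hf : ∀ j ∈ Finset.univ \ ({i} : Finset (Fin m)), f j ∈ T j x)
    (hg : ∀ j ∈ Finset.univ \ ({i} : Finset (Fin m)), g j ∈ T j y)
    (hfv : -v = ∑ j ∈ Finset.univ \ ({i} : Finset (Fin m)), f j)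
    (hgw : -w = ∑ j ∈ Finset.univ \ ({i} : Finset (Fin m)), g j) :
    (v - w) (x - y) = 0 ∧
      ∀ j ∈ Finset.univ \ ({i} : Finset (Fin m)), (f j - g j) (x - y) = 0 := by
  set s := Finset.univ \ ({i} : Finset (Fin m)) with hs
  have hsum0 : (v - w) (x - y) + ∑ j ∈ s, (f j - g j) (x - y) = 0 := by
    have h1 : (v - w) + ∑ j ∈ s, (f j - g j) = 0 := by
      rw [Finset.sum_sub_distrib, ← hfv, ← hgw]; abel
    have h2 := congrArg (fun u : X →L[ℝ] ℝ => u (x - y)) h1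
    simpa [ContinuousLinearMap.sum_apply] using h2
  have hterm : ∀ j ∈ s, 0 ≤ (f j - g j) (x - y) := fun j hj =>
    (hT j).1 (hf j hj) (hg j hj)
  have hvw : 0 ≤ (v - w) (x - y) := (hT i).1 hv hw
  have hsumnn : 0 ≤ ∑ j ∈ s, (f j - g j) (x - y) := Finset.sum_nonneg hterm
  have h1 : (v - w) (x - y) = 0 := by linarith
  have h2 : ∑ j ∈ s, (f j - g j) (x - y) = 0 := by linarith
  exact ⟨h1, (Finset.sum_eq_zero_iff_of_nonneg hterm).mp h2⟩

/-- One-sided transport: any element of `T̃ᵢ x` belongs to `T̃ᵢ y` whenever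
`T̃ᵢ y` is nonempty. -/
lemma ttilde_subset (T : Fin m → X → Set (X →L[ℝ] ℝ))
    (hT : ∀ i, ParamonotoneOp (T i)) (i : Fin m) {x y : X}
    {u w : X →L[ℝ] ℝ} (hu : u ∈ Ttilde T i x) (hw : w ∈ Ttilde T i y) :
    u ∈ Ttilde T i y := by
  obtain ⟨hu1, f, hf, hfu⟩ := hu
  obtain ⟨hw1, g, hg, hgw⟩ := hw
  obtain ⟨h0, hall⟩ := ttilde_key T hT i hu1 hw1 hf hg hfu hgw
  refine ⟨((hT i).2 hu1 hw1 h0).2, f, fun j hj => ?_, hfu⟩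
  exact ((hT j).2 (hf j hj) (hg j hj) (hall j hj)).2

end Aux

theorem ttilde_monotone_constant {X : Type*} [NormedAddCommGroup X]
    [NormedSpace ℝ X] [CompleteSpace X] {m : ℕ}
    (T : Fin m → X → Set (X →L[ℝ] ℝ)) (hT : ∀ i, ParamonotoneOp (T i)) :
    ∀ i : Fin m,
      MonotoneOp (Ttilde T i) ∧
      (∀ x, (Ttilde T i x).Nonempty → ∀ y, (Ttilde T i y).Nonempty →
        Ttilde T i x = Ttilde T i y) ∧
      {x | (Ttilde T i x).Nonempty} =
        {x | (0 : X →L[ℝ] ℝ) ∈ FamSum T Finset.univ x} := by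
  intro i
  refine ⟨?_, ?_, ?_⟩
  · -- monotone
    intro x y xs ys hx hy
    obtain ⟨hx1, f, hf, hfx⟩ := hx
    obtain ⟨hy1, g, hg, hgy⟩ := hy
    exact le_of_eq (ttilde_key T hT i hx1 hy1 hf hg hfx hgy).1.symm
  · -- constant on domain
    intro x ⟨v, hv⟩ y ⟨w, hw⟩
    ext u
    exact ⟨fun hu => ttilde_subset T hT i hu hw,
      fun hu => ttilde_subset T hT i hu hv⟩
  · -- domain equals A
    ext x
    simp only [Set.mem_setOf_eq]
    constructor
    · rintro ⟨v, hv1, f, hf, hfv⟩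
      refine ⟨Function.update f i v, fun j _ => ?_, ?_⟩
      · by_cases hj : j = i
        · subst hj; simpa using hv1
        · rw [Function.update_of_ne hj]
          exact hf j (by simp [hj])
      · have hsplit : ∑ j, Function.update f i v j =
            Function.update f i v i + ∑ j ∈ Finset.univ.erase i, Function.update f i v j :=
          (Finset.add_sum_erase _ _ (Finset.mem_univ i)).symm
        have heq : ∑ j ∈ Finset.univ.erase i, Function.update f i v j =
            ∑ j ∈ Finset.univ \ {i}, f j := by
          rw [← Finset.erase_eq]
          exact Finset.sum_congr rfl fun j hj =>
            Function.update_of_ne (Finset.ne_of_mem_erase hj) _ _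
        rw [hsplit, heq, Function.update_self, ← hfv]
        abel
    · rintro ⟨f, hf, h0⟩
      refine ⟨f i, hf i (Finset.mem_univ i), f, fun j hj => hf j (Finset.mem_univ j), ?_⟩
      have hsplit := (Finset.add_sum_erase _ f (Finset.mem_univ i)).symm
      rw [Finset.erase_eq] at hsplit
      have h2 : f i + ∑ j ∈ Finset.univ \ {i}, f j = 0 := by
        rw [← hsplit]; exact h0.symm
      exact neg_eq_of_add_eq_zero_right h2
end

section
/- Let f_i : X → (−∞,+∞], i = 1,…,m, be proper lsc convex functions such that ∂(Σ f_i)(x) = Σ ∂f_i(x) for all x (sum rule holds, e.g. under a regularity condition). If for some index j₀ the function f_{j₀} is (Gâteaux) differentiable on A := argmin Σᵢ f_i, then the gradient ∇f_{j₀} is constant on A. -/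
/-- The convex subdifferential of an extended-real-valued function. -/
def ESubdiff {X : Type*} [NormedAddCommGroup X] [NormedSpace ℝ X]
    (f : X → EReal) (x : X) : Set (X →L[ℝ] ℝ) :=
  {p | ∀ y : X, f x + (p (y - x) : EReal) ≤ f y}

/-- Properness of an extended-real-valued function. -/
def EProper {X : Type*} [NormedAddCommGroup X] [NormedSpace ℝ X]
    (f : X → EReal) : Prop :=
  (∀ x, f x ≠ ⊥) ∧ ∃ x, f x ≠ ⊤

/-- Convexity of an extended-real-valued function. -/
def EConvex {X : Type*} [NormedAddCommGroup X] [NormedSpace ℝ X]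
    (f : X → EReal) : Prop :=
  ∀ x y : X, ∀ t : ℝ, 0 ≤ t → t ≤ 1 →
    f (t • x + (1 - t) • y) ≤ (t : EReal) * f x + ((1 - t : ℝ) : EReal) * f y

private lemma key{X : Type*} [NormedAddCommGroup X] [NormedSpace ℝ X] {m : ℕ}
    (f : Fin m → X → EReal) (hproper : ∀ i, EProper (f i))
    (x y : X)
    (hx : ∀ z, (∑ i, f i x) ≤ ∑ i, f i z)
    (hy : ∀ z, (∑ i, f i y) ≤ ∑ i, f i z)
    (q : Fin m → (X →L[ℝ] ℝ)) (hq : ∀ i, q i ∈ ESubdiff (f i) x)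
    (hq0 : ∑ i, q i = 0)
    (r : Fin m → (X →L[ℝ] ℝ)) (hr : ∀ i, r i ∈ ESubdiff (f i) y) :
    ∀ i, q i ∈ ESubdiff (f i) y := by
  -- finiteness of f i x and f i y
  have hfin : ∀ (w : X) (s : Fin m → (X →L[ℝ] ℝ)), (∀ i, s i ∈ ESubdiff (f i) w) →
      ∀ i, (f i w ≠ ⊤ ∧ f i w ≠ ⊥) := by
    intro w s hs i
    refine ⟨?_, (hproper i).1 w⟩
    obtain ⟨z, hz⟩ := (hproper i).2
    intro htop
    have := hs i z
    rw [htop] at this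
    rw [EReal.top_add_coe] at this
    exact hz (top_le_iff.mp this)
  set a : Fin m → ℝ := fun i => (f i x).toReal with ha
  set b : Fin m → ℝ := fun i => (f i y).toReal with hb
  have hax : ∀ i, ((a i : ℝ) : EReal) = f i x := fun i =>
    EReal.coe_toReal (hfin x q hq i).1 (hfin x q hq i).2
  have hby : ∀ i, ((b i : ℝ) : EReal) = f i y := fun i =>
    EReal.coe_toReal (hfin y r hr i).1 (hfin y r hr i).2
  -- termwise inequality as reals
  have hterm : ∀ i, a i + (q i) (y - x) ≤ b i := by
    intro i
    have := hq i y
    rw [← hax i, ← hby i] at this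
    exact_mod_cast this
  -- sums equal
  have hcoesum : ∀ c : Fin m → ℝ, ((∑ i, c i : ℝ) : EReal) = ∑ i, ((c i : ℝ) : EReal) :=
    fun c => map_sum (⟨⟨Real.toEReal, EReal.coe_zero⟩, EReal.coe_add⟩ : ℝ →+ EReal) c Finset.univ
  have hsx : (∑ i, f i x) = ((∑ i, a i : ℝ) : EReal) := by
    rw [hcoesum]; exact Finset.sum_congr rfl fun i _ => (hax i).symm
  have hsy : (∑ i, f i y) = ((∑ i, b i : ℝ) : EReal) := by
    rw [hcoesum]; exact Finset.sum_congr rfl fun i _ => (hby i).symm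
  have hsumeq : (∑ i, a i) = ∑ i, b i := by
    have h1 := hx y; have h2 := hy x
    rw [hsx, hsy] at h1 h2
    exact_mod_cast le_antisymm h1 h2
  have hsum2 : (∑ i, (a i + (q i) (y - x))) = ∑ i, a i := by
    rw [Finset.sum_add_distrib]
    have : (∑ i, (q i) (y - x)) = 0 := by
      have : (∑ i, q i) (y - x) = 0 := by rw [hq0]; simp
      simpa [ContinuousLinearMap.sum_apply] using this
    rw [this, add_zero]
  have heq : ∀ i, a i + (q i) (y - x) = b i := by
    have := (Finset.sum_eq_sum_iff_of_le (fun i _ => hterm i)).mp (by rw [hsum2, hsumeq])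
    exact fun i => this i (Finset.mem_univ i)
  intro i z
  rw [← hby i]
  have : ((b i : ℝ) : EReal) + ((q i) (z - y) : ℝ) = ((a i + (q i) (z - x) : ℝ) : EReal) := by
    rw [← heq i]
    push_cast
    have : (q i) (y - x) + (q i) (z - y) = (q i) (z - x) := by
      rw [← map_add]; congr 1; abel
    rw [add_assoc]
    norm_cast
    rw [this]
  rw [this]
  calc ((a i + (q i) (z - x) : ℝ) : EReal) = ((a i : ℝ) : EReal) + ((q i) (z - x) : ℝ) := by push_cast; ring
    _ ≤ f i z := by rw [hax i]; exact hq i z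

theorem gradient_constant_on_argmin {X : Type*} [NormedAddCommGroup X]
    [NormedSpace ℝ X] [CompleteSpace X] {m : ℕ} (f : Fin m → X → EReal)
    (hproper : ∀ i, EProper (f i))
    (hlsc : ∀ i, LowerSemicontinuous (f i))
    (hconv : ∀ i, EConvex (f i))
    (hsum : ∀ x, ESubdiff (fun z => ∑ i, f i z) x =
      {p | ∃ q : Fin m → (X →L[ℝ] ℝ), (∀ i, q i ∈ ESubdiff (f i) x) ∧ p = ∑ i, q i})
    (j₀ : Fin m)
    (A : Set X) (hA : A = {x | ∀ y, (∑ i, f i x) ≤ ∑ i, f i y})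
    (hdiff : ∀ x ∈ A, ∃ p : X →L[ℝ] ℝ, ESubdiff (f j₀) x = {p}) :
    ∀ x ∈ A, ∀ y ∈ A, ESubdiff (f j₀) x = ESubdiff (f j₀) y := by
  intro x hx y hy
  have hx' : ∀ z, (∑ i, f i x) ≤ ∑ i, f i z := by rw [hA] at hx; exact hx
  have hy' : ∀ z, (∑ i, f i y) ≤ ∑ i, f i z := by rw [hA] at hy; exact hy
  have h0x : (0 : X →L[ℝ] ℝ) ∈ ESubdiff (fun z => ∑ i, f i z) x := by
    intro z; simpa using hx' z
  have h0y : (0 : X →L[ℝ] ℝ) ∈ ESubdiff (fun z => ∑ i, f i z) y := by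
    intro z; simpa using hy' z
  rw [hsum] at h0x h0y
  obtain ⟨q, hq, hq0⟩ := h0x
  obtain ⟨r, hr, hr0⟩ := h0y
  obtain ⟨px, hpx⟩ := hdiff x hx
  obtain ⟨py, hpy⟩ := hdiff y hy
  have hqy : q j₀ ∈ ESubdiff (f j₀) y := key f hproper x y hx' hy' q hq hq0.symm r hr j₀
  have e1 : q j₀ = px := by have := hq j₀; rw [hpx] at this; exact this
  have e2 : q j₀ = py := by rw [hpy] at hqy; exact hqy
  rw [hpx, hpy, ← e1, ← e2]
end

section
/- Let X be a Hilbert space, S₁,…,S_m nonempty closed convex subsets with empty intersection, α_i > 0 with Σα_i = 1, p ≥ 1. A point ū = (ū₁,…,ū_m) ∈ X^m is an optimal solution to minimizing the weighted p-norm ‖u‖_{α,p} = (Σ α_i‖u_i‖^p)^{1/p} subject to ∩ᵢ(S_i + u_i) ≠ ∅ if and only if there exists a minimizer x̄ of x ↦ Σᵢ α_i d(x,S_i)^p such that ū_i = x̄ − P_i(x̄) for each i, where P_i(x̄) is the metric projection of x̄ onto S_i. -/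
open Metric

lemma exists_proj_aux {X : Type*} [NormedAddCommGroup X] [InnerProductSpace ℝ X]
    [CompleteSpace X] {S : Set X} (hne : S.Nonempty) (hcl : IsClosed S)
    (hconv : Convex ℝ S) (x : X) : ∃ q ∈ S, dist x q = infDist x S := by
  obtain ⟨q, hq, hq2⟩ := exists_norm_eq_iInf_of_complete_convex hne hcl.isComplete hconv x
  refine ⟨q, hq, ?_⟩
  rw [dist_eq_norm, hq2, Metric.infDist_eq_iInf]
  simp_rw [dist_eq_norm]

theorem simultaneous_projection_equiv {X : Type*} [NormedAddCommGroup X]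
    [InnerProductSpace ℝ X] [CompleteSpace X] {m : ℕ}
    (S : Fin m → Set X) (hne : ∀ i, (S i).Nonempty)
    (hcl : ∀ i, IsClosed (S i)) (hconv : ∀ i, Convex ℝ (S i))
    (hempty : (⋂ i, S i) = ∅)
    (α : Fin m → ℝ) (hα : ∀ i, 0 < α i) (hsum : ∑ i, α i = 1)
    (p : ℝ) (hp : 1 ≤ p) (ub : Fin m → X) :
    ((⋂ i, (fun s => s + ub i) '' S i).Nonempty ∧
      ∀ u : Fin m → X, (⋂ i, (fun s => s + u i) '' S i).Nonempty →
        (∑ i, α i * ‖ub i‖ ^ p) ^ (1 / p) ≤ (∑ i, α i * ‖u i‖ ^ p) ^ (1 / p)) ↔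
    (∃ xb : X,
      (∀ x : X, ∑ i, α i * infDist xb (S i) ^ p ≤ ∑ i, α i * infDist x (S i) ^ p) ∧
      ∀ i, ∃ q ∈ S i, dist xb q = infDist xb (S i) ∧ ub i = xb - q) := by
  have hp0 : (0:ℝ) < p := lt_of_lt_of_le one_pos hp
  -- nonnegativity of sums
  have hsum_nonneg : ∀ u : Fin m → X, (0:ℝ) ≤ ∑ i, α i * ‖u i‖ ^ p := by
    intro u
    refine Finset.sum_nonneg fun i _ => ?_
    exact mul_nonneg (hα i).le (Real.rpow_nonneg (norm_nonneg _) p)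
  have hFsum_nonneg : ∀ x : X, (0:ℝ) ≤ ∑ i, α i * infDist x (S i) ^ p := by
    intro x
    refine Finset.sum_nonneg fun i _ => ?_
    exact mul_nonneg (hα i).le (Real.rpow_nonneg (infDist_nonneg) p)
  -- feasibility: x ∈ ⋂ (S i + u i) ↔ x - u i ∈ S i for all i
  have hmem : ∀ (u : Fin m → X) (x : X),
      x ∈ (⋂ i, (fun s => s + u i) '' S i) ↔ ∀ i, x - u i ∈ S i := by
    intro u x
    simp only [Set.mem_iInter, Set.mem_image]
    constructor
    · intro h i
      obtain ⟨s, hs, hsx⟩ := h i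
      have : x - u i = s := by rw [← hsx]; abel
      rwa [this]
    · intro h i
      exact ⟨x - u i, h i, by abel⟩
  -- for feasible u and x in the intersection, F(x) ≤ G(u)
  have hFG : ∀ (u : Fin m → X) (x : X), (∀ i, x - u i ∈ S i) →
      ∑ i, α i * infDist x (S i) ^ p ≤ ∑ i, α i * ‖u i‖ ^ p := by
    intro u x hx
    refine Finset.sum_le_sum fun i _ => ?_
    refine mul_le_mul_of_nonneg_left ?_ (hα i).le
    refine Real.rpow_le_rpow infDist_nonneg ?_ hp0.le
    have := infDist_le_dist_of_mem (x := x) (hx i)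
    rwa [dist_eq_norm, show x - (x - u i) = u i by abel] at this
  constructor
  · rintro ⟨⟨xb, hxb⟩, hopt⟩
    rw [hmem] at hxb
    -- the candidate projections: xb - ub i ∈ S i, with equality of norms
    have heq : ∀ i, ‖ub i‖ = infDist xb (S i) := by
      intro i
      by_contra hne'
      have hlt : infDist xb (S i) < ‖ub i‖ := by
        rcases lt_or_eq_of_le (by
          have := infDist_le_dist_of_mem (x := xb) (hxb i)
          rwa [dist_eq_norm, show xb - (xb - ub i) = ub i by abel] at this) with h | h
        · exact h
        · exact absurd h.symm hne'
      -- build a strictly better feasible u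
      choose q hq hqd using fun j => exists_proj_aux (hne j) (hcl j) (hconv j) xb
      set u : Fin m → X := fun j => xb - q j with hu
      have hufeas : (⋂ j, (fun s => s + u j) '' S j).Nonempty := by
        refine ⟨xb, (hmem u xb).2 fun j => ?_⟩
        simpa [hu] using hq j
      have hle := hopt u hufeas
      rw [Real.rpow_le_rpow_iff (hsum_nonneg ub) (hsum_nonneg u) (by positivity)] at hle
      have hstrict : ∑ j, α j * ‖u j‖ ^ p < ∑ j, α j * ‖ub j‖ ^ p := by
        refine Finset.sum_lt_sum (fun j _ => ?_) ⟨i, Finset.mem_univ i, ?_⟩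
        · refine mul_le_mul_of_nonneg_left ?_ (hα j).le
          refine Real.rpow_le_rpow (norm_nonneg _) ?_ hp0.le
          have h1 : ‖u j‖ = infDist xb (S j) := by
            rw [hu]; rw [← dist_eq_norm]; exact hqd j
          have h2 := infDist_le_dist_of_mem (x := xb) (hxb j)
          rw [dist_eq_norm, show xb - (xb - ub j) = ub j by abel] at h2
          rw [h1]; exact h2
        · refine mul_lt_mul_of_pos_left ?_ (hα i)
          have h1 : ‖u i‖ = infDist xb (S i) := by
            rw [hu]; rw [← dist_eq_norm]; exact hqd i
          rw [h1]
          exact Real.rpow_lt_rpow infDist_nonneg hlt hp0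
      exact absurd hle (not_le.2 hstrict)
    refine ⟨xb, ?_, ?_⟩
    · intro x
      choose q hq hqd using fun j => exists_proj_aux (hne j) (hcl j) (hconv j) x
      set u : Fin m → X := fun j => x - q j with hu
      have hufeas : (⋂ j, (fun s => s + u j) '' S j).Nonempty := by
        refine ⟨x, (hmem u x).2 fun j => ?_⟩
        simpa [hu] using hq j
      have hle := hopt u hufeas
      rw [Real.rpow_le_rpow_iff (hsum_nonneg ub) (hsum_nonneg u) (by positivity)] at hle
      have hG : ∑ j, α j * ‖u j‖ ^ p = ∑ j, α j * infDist x (S j) ^ p := by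
        refine Finset.sum_congr rfl fun j _ => ?_
        rw [hu]; rw [← dist_eq_norm, hqd j]
      have hF : ∑ j, α j * ‖ub j‖ ^ p = ∑ j, α j * infDist xb (S j) ^ p := by
        refine Finset.sum_congr rfl fun j _ => ?_
        rw [heq j]
      rw [hG, hF] at hle
      exact hle
    · intro i
      refine ⟨xb - ub i, hxb i, ?_, by abel⟩
      rw [dist_eq_norm, show xb - (xb - ub i) = ub i by abel, heq i]
  · rintro ⟨xb, hmin, hproj⟩
    choose q hq hqd hub using hproj
    have hxbfeas : xb ∈ ⋂ i, (fun s => s + ub i) '' S i := by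
      refine (hmem ub xb).2 fun i => ?_
      rw [hub i, show xb - (xb - q i) = q i by abel]
      exact hq i
    refine ⟨⟨xb, hxbfeas⟩, fun u hu => ?_⟩
    obtain ⟨x, hx⟩ := hu
    rw [hmem] at hx
    have hGF : ∑ i, α i * ‖ub i‖ ^ p = ∑ i, α i * infDist xb (S i) ^ p := by
      refine Finset.sum_congr rfl fun i _ => ?_
      rw [hub i, ← dist_eq_norm, hqd i]
    refine Real.rpow_le_rpow (hsum_nonneg ub) ?_ (by positivity)
    calc ∑ i, α i * ‖ub i‖ ^ p = ∑ i, α i * infDist xb (S i) ^ p := hGF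
      _ ≤ ∑ i, α i * infDist x (S i) ^ p := hmin x
      _ ≤ ∑ i, α i * ‖u i‖ ^ p := hFG u x hx
end

section
/- Let X be a Hilbert space, S₁, S₂ nonempty closed convex disjoint subsets, and α₁ > α₂ > 0 with α₁ + α₂ = 1. Then argmin_{x∈X} (α₁ d(x,S₁) + α₂ d(x,S₂)) equals argmin over S₁ of the function d_{S₂}, i.e., {x ∈ S₁ : d(x,S₂) ≤ d(s,S₂) for all s ∈ S₁}. -/
open Metric

lemma exists_proj_point {X : Type*} [NormedAddCommGroup X]
    [InnerProductSpace ℝ X] [CompleteSpace X]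
    (S : Set X) (hne : S.Nonempty) (hc : IsClosed S) (hv : Convex ℝ S) (x : X) :
    ∃ p ∈ S, dist x p = infDist x S := by
  obtain ⟨p, hp, hnorm⟩ := exists_norm_eq_iInf_of_complete_convex hne hc.isComplete hv x
  refine ⟨p, hp, ?_⟩
  rw [infDist_eq_iInf, dist_eq_norm, hnorm]
  congr 1
  ext w
  rw [dist_eq_norm]

theorem argmin_weighted_dist_p1 {X : Type*} [NormedAddCommGroup X]
    [InnerProductSpace ℝ X] [CompleteSpace X]
    (S₁ S₂ : Set X) (h₁ : S₁.Nonempty) (h₂ : S₂.Nonempty)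
    (hc₁ : IsClosed S₁) (hc₂ : IsClosed S₂)
    (hv₁ : Convex ℝ S₁) (hv₂ : Convex ℝ S₂) (hdisj : S₁ ∩ S₂ = ∅)
    (α₁ α₂ : ℝ) (hlt : α₂ < α₁) (hpos : 0 < α₂) (hsum : α₁ + α₂ = 1) :
    {x : X | ∀ y : X, α₁ * infDist x S₁ + α₂ * infDist x S₂ ≤
        α₁ * infDist y S₁ + α₂ * infDist y S₂} =
      {x : X | x ∈ S₁ ∧ ∀ s ∈ S₁, infDist x S₂ ≤ infDist s S₂} := by
  ext x
  simp only [Set.mem_setOf_eq]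
  constructor
  · intro hx
    -- get the projection p of x onto S₁
    obtain ⟨p, hpS, hpd⟩ := exists_proj_point S₁ h₁ hc₁ hv₁ x
    have hd2p : infDist p S₂ ≤ infDist x S₂ + infDist x S₁ := by
      calc infDist p S₂ ≤ infDist x S₂ + dist p x := infDist_le_infDist_add_dist
        _ = infDist x S₂ + infDist x S₁ := by rw [dist_comm, hpd]
    have hxS₁ : x ∈ S₁ := by
      by_contra hxn
      have hdpos : 0 < infDist x S₁ := (hc₁.notMem_iff_infDist_pos h₁).mp hxn
      have hfp : α₁ * infDist p S₁ + α₂ * infDist p S₂ < α₁ * infDist x S₁ + α₂ * infDist x S₂ := by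
        rw [infDist_zero_of_mem hpS]
        have : α₂ * infDist p S₂ ≤ α₂ * (infDist x S₂ + infDist x S₁) :=
          mul_le_mul_of_nonneg_left hd2p hpos.le
        nlinarith
      exact absurd (hx p) (by linarith)
    refine ⟨hxS₁, fun s hs => ?_⟩
    have := hx s
    rw [infDist_zero_of_mem hxS₁, infDist_zero_of_mem hs] at this
    exact le_of_mul_le_mul_left (by linarith) hpos
  · rintro ⟨hxS₁, hmin⟩
    intro y
    obtain ⟨q, hqS, hqd⟩ := exists_proj_point S₁ h₁ hc₁ hv₁ y
    have hd2q : infDist q S₂ ≤ infDist y S₂ + infDist y S₁ := by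
      calc infDist q S₂ ≤ infDist y S₂ + dist q y := infDist_le_infDist_add_dist
        _ = infDist y S₂ + infDist y S₁ := by rw [dist_comm, hqd]
    have hxq : infDist x S₂ ≤ infDist q S₂ := hmin q hqS
    have h1 : 0 ≤ infDist y S₁ := infDist_nonneg
    rw [infDist_zero_of_mem hxS₁]
    nlinarith [infDist_nonneg (x := y) (s := S₂)]
end

section
/- Let X be a Hilbert space and S₁, S₂ nonempty closed convex disjoint sets. Then the set of minimizers of x ↦ ½d(x,S₁) + ½d(x,S₂) equals {x ∈ X : x ∈ ]P₁(x), P₂(x)[} ∪ argmin_{S₁} d_{S₂} ∪ argmin_{S₂} d_{S₁}, where ]P₁(x),P₂(x)[ is the open segment between the projections P₁(x) ∈ S₁ and P₂(x) ∈ S₂ of x. -/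
open Metric

/-!
If `x` lies in neither set, comparing `x` with the midpoint of its two projections gives
`d(x, S₁) + d(x, S₂) ≤ ‖P₁ x - P₂ x‖`, so the triangle inequality through `x` is an equality and,
the space being strictly convex, `x` lies strictly between `P₁ x` and `P₂ x`. Conversely, if `x`
lies strictly between them, the variational inequalities of the two projections say that the
hyperplanes through `P₁ x` and `P₂ x` orthogonal to `P₂ x - P₁ x` separate `S₁` from `S₂`, so
`‖P₁ x - P₂ x‖` is the distance between the sets, a lower bound for `d(y, S₁) + d(y, S₂)`.
-/

lemma mem_openSegment_iff_exists_eq {E : Type*} [AddCommGroup E] [Module ℝ E] {a b x : E} :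
    x ∈ openSegment ℝ a b ↔ ∃ t : ℝ, 0 < t ∧ t < 1 ∧ x = (1 - t) • a + t • b := by
  simp only [openSegment_eq_image, Set.mem_image, Set.mem_Ioo, and_assoc, eq_comm]

section PseudoMetricSpace

variable {α : Type*} [PseudoMetricSpace α] {S₁ S₂ : Set α} {y a b : α}

lemma dist_le_infDist_add_infDist_of_dist_eq (ha : dist y a = infDist y S₁)
    (hb : dist y b = infDist y S₂) : dist a b ≤ infDist y S₁ + infDist y S₂ :=
  (dist_triangle_left a b y).trans_eq (by rw [ha, hb])

lemma infDist_le_infDist_add_infDist_of_dist_eq (ha : dist y a = infDist y S₁) :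
    infDist a S₂ ≤ infDist y S₁ + infDist y S₂ :=
  infDist_le_infDist_add_dist.trans_eq (by rw [dist_comm, ha, add_comm])

end PseudoMetricSpace

lemma mem_openSegment_of_dist_add_dist_le {E : Type*} [NormedAddCommGroup E] [NormedSpace ℝ E]
    [StrictConvexSpace ℝ E] {a b x : E} (hxa : x ≠ a) (hxb : x ≠ b)
    (h : dist a x + dist x b ≤ dist a b) : x ∈ openSegment ℝ a b :=
  mem_openSegment_of_ne_left_right hxa.symm hxb.symm <| mem_segment_iff_wbtw.2 <|
    dist_add_dist_eq_iff.1 (h.antisymm (dist_triangle _ _ _))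

lemma infDist_add_infDist_midpoint_le {E : Type*} [NormedAddCommGroup E] [NormedSpace ℝ E]
    {S₁ S₂ : Set E} {a b : E} (ha : a ∈ S₁) (hb : b ∈ S₂) :
    infDist (midpoint ℝ a b) S₁ + infDist (midpoint ℝ a b) S₂ ≤ dist a b := by
  calc infDist (midpoint ℝ a b) S₁ + infDist (midpoint ℝ a b) S₂
      ≤ dist (midpoint ℝ a b) a + dist (midpoint ℝ a b) b :=
        add_le_add (infDist_le_dist_of_mem ha) (infDist_le_dist_of_mem hb)
    _ = dist a b := by
        rw [dist_midpoint_left, dist_midpoint_right, ← add_mul, Real.norm_two]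
        ring

section InnerProductSpace

variable {X : Type*} [NormedAddCommGroup X] [InnerProductSpace ℝ X]

open scoped InnerProductSpace

lemma real_inner_sub_nonpos_of_dist_eq_infDist {S : Set X} (hS : Convex ℝ S) {x a s : X}
    (ha : a ∈ S) (hd : dist x a = infDist x S) (hs : s ∈ S) : ⟪x - a, s - a⟫_ℝ ≤ 0 := by
  refine (norm_eq_iInf_iff_real_inner_le_zero hS ha).1 ?_ s hs
  simp_rw [← dist_eq_norm, hd, infDist_eq_iInf]

lemma real_inner_sub_nonpos_of_mem_openSegment {S : Set X} (hS : Convex ℝ S) {x a b s : X}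
    (ha : a ∈ S) (hd : dist x a = infDist x S) (hx : x ∈ openSegment ℝ a b) (hs : s ∈ S) :
    ⟪b - a, s - a⟫_ℝ ≤ 0 := by
  obtain ⟨t, ⟨ht, -⟩, rfl⟩ := (openSegment_eq_image' ℝ a b).subset hx
  have h := real_inner_sub_nonpos_of_dist_eq_infDist hS ha hd hs
  rw [add_sub_cancel_left, real_inner_smul_left] at h
  exact nonpos_of_mul_nonpos_right h ht

lemma dist_le_dist_of_real_inner_nonpos {a b s₁ s₂ : X}
    (h₁ : ⟪b - a, s₁ - a⟫_ℝ ≤ 0) (h₂ : ⟪a - b, s₂ - b⟫_ℝ ≤ 0) : dist a b ≤ dist s₁ s₂ := by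
  have h₂' : 0 ≤ ⟪b - a, s₂ - b⟫_ℝ := by
    rw [← neg_sub b a, inner_neg_left] at h₂
    linarith
  have key : ‖b - a‖ * ‖b - a‖ ≤ ‖b - a‖ * ‖s₂ - s₁‖ :=
    calc ‖b - a‖ * ‖b - a‖ = ⟪b - a, b - a⟫_ℝ := (real_inner_self_eq_norm_mul_norm _).symm
      _ ≤ ⟪b - a, s₂ - s₁⟫_ℝ := by
        have : ⟪b - a, s₂ - s₁⟫_ℝ =
            ⟪b - a, b - a⟫_ℝ + ⟪b - a, s₂ - b⟫_ℝ - ⟪b - a, s₁ - a⟫_ℝ := by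
          rw [← inner_add_right, ← inner_sub_right]
          congr 1
          abel
        linarith
      _ ≤ ‖b - a‖ * ‖s₂ - s₁‖ := real_inner_le_norm _ _
  rw [dist_comm a, dist_eq_norm, dist_comm, dist_eq_norm]
  nlinarith [norm_nonneg (b - a), norm_nonneg (s₂ - s₁)]

lemma dist_le_dist_of_mem_openSegment {S₁ S₂ : Set X} (hv₁ : Convex ℝ S₁) (hv₂ : Convex ℝ S₂)
    {x a b s₁ s₂ : X} (ha : a ∈ S₁) (hda : dist x a = infDist x S₁) (hb : b ∈ S₂)
    (hdb : dist x b = infDist x S₂) (hx : x ∈ openSegment ℝ a b) (hs₁ : s₁ ∈ S₁)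
    (hs₂ : s₂ ∈ S₂) : dist a b ≤ dist s₁ s₂ :=
  dist_le_dist_of_real_inner_nonpos
    (real_inner_sub_nonpos_of_mem_openSegment hv₁ ha hda hx hs₁)
    (real_inner_sub_nonpos_of_mem_openSegment hv₂ hb hdb (openSegment_symm ℝ a b ▸ hx) hs₂)

end InnerProductSpace

theorem argmin_half_dist_sum_char_general {X : Type*} [NormedAddCommGroup X]
    [InnerProductSpace ℝ X]
    (S₁ S₂ : Set X)
    (hv₁ : Convex ℝ S₁) (hv₂ : Convex ℝ S₂)
    (P₁ P₂ : X → X)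
    (hP₁ : ∀ x, P₁ x ∈ S₁ ∧ dist x (P₁ x) = infDist x S₁)
    (hP₂ : ∀ x, P₂ x ∈ S₂ ∧ dist x (P₂ x) = infDist x S₂) :
    {x : X | ∀ y : X, (1 / 2) * infDist x S₁ + (1 / 2) * infDist x S₂ ≤
        (1 / 2) * infDist y S₁ + (1 / 2) * infDist y S₂} =
      {x : X | ∃ t : ℝ, 0 < t ∧ t < 1 ∧ x = (1 - t) • P₁ x + t • P₂ x} ∪
      {x : X | x ∈ S₁ ∧ ∀ s ∈ S₁, infDist x S₂ ≤ infDist s S₂} ∪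
      {x : X | x ∈ S₂ ∧ ∀ s ∈ S₂, infDist x S₁ ≤ infDist s S₁} := by
  have half (x y : X) : (1 / 2) * infDist x S₁ + (1 / 2) * infDist x S₂ ≤
      (1 / 2) * infDist y S₁ + (1 / 2) * infDist y S₂ ↔
      infDist x S₁ + infDist x S₂ ≤ infDist y S₁ + infDist y S₂ := by
    constructor <;> intro h <;> linarith
  ext x
  obtain ⟨ha, hda⟩ := hP₁ x
  obtain ⟨hb, hdb⟩ := hP₂ x
  simp only [Set.mem_union, Set.mem_ofPred_eq, half, ← mem_openSegment_iff_exists_eq]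
  constructor
  · intro hx
    by_cases hx₁ : x ∈ S₁
    · refine .inl (.inr ⟨hx₁, fun s hs => ?_⟩)
      simpa [infDist_zero_of_mem hx₁, infDist_zero_of_mem hs] using hx s
    by_cases hx₂ : x ∈ S₂
    · refine .inr ⟨hx₂, fun s hs => ?_⟩
      simpa [infDist_zero_of_mem hx₂, infDist_zero_of_mem hs] using hx s
    refine .inl (.inl (mem_openSegment_of_dist_add_dist_le (fun h => hx₁ (h ▸ ha))
      (fun h => hx₂ (h ▸ hb)) ?_))
    rw [dist_comm _ x, hda, hdb]
    exact (hx _).trans (infDist_add_infDist_midpoint_le ha hb)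
  · rintro ((hseg | ⟨hx₁, hmin⟩) | ⟨hx₂, hmin⟩) y
    · rw [← hda, ← hdb, dist_comm x,
        dist_add_dist_of_mem_segment (openSegment_subset_segment _ _ _ hseg)]
      exact (dist_le_dist_of_mem_openSegment hv₁ hv₂ ha hda hb hdb hseg (hP₁ y).1 (hP₂ y).1).trans
        (dist_le_infDist_add_infDist_of_dist_eq (hP₁ y).2 (hP₂ y).2)
    · rw [infDist_zero_of_mem hx₁, zero_add]
      exact (hmin _ (hP₁ y).1).trans (infDist_le_infDist_add_infDist_of_dist_eq (hP₁ y).2)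
    · rw [infDist_zero_of_mem hx₂, add_zero, add_comm (infDist y S₁)]
      exact (hmin _ (hP₂ y).1).trans (infDist_le_infDist_add_infDist_of_dist_eq (hP₂ y).2)

theorem argmin_half_dist_sum_char {X : Type*} [NormedAddCommGroup X]
    [InnerProductSpace ℝ X] [CompleteSpace X]
    (S₁ S₂ : Set X) (h₁ : S₁.Nonempty) (h₂ : S₂.Nonempty)
    (hc₁ : IsClosed S₁) (hc₂ : IsClosed S₂)
    (hv₁ : Convex ℝ S₁) (hv₂ : Convex ℝ S₂) (hdisj : S₁ ∩ S₂ = ∅)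
    (P₁ P₂ : X → X)
    (hP₁ : ∀ x, P₁ x ∈ S₁ ∧ dist x (P₁ x) = infDist x S₁)
    (hP₂ : ∀ x, P₂ x ∈ S₂ ∧ dist x (P₂ x) = infDist x S₂) :
    {x : X | ∀ y : X, (1 / 2) * infDist x S₁ + (1 / 2) * infDist x S₂ ≤
        (1 / 2) * infDist y S₁ + (1 / 2) * infDist y S₂} =
      {x : X | ∃ t : ℝ, 0 < t ∧ t < 1 ∧ x = (1 - t) • P₁ x + t • P₂ x} ∪
      {x : X | x ∈ S₁ ∧ ∀ s ∈ S₁, infDist x S₂ ≤ infDist s S₂} ∪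
      {x : X | x ∈ S₂ ∧ ∀ s ∈ S₂, infDist x S₁ ≤ infDist s S₁} :=
  argmin_half_dist_sum_char_general S₁ S₂ hv₁ hv₂ P₁ P₂ hP₁ hP₂
end

section
/- Let X be a Hilbert space, S₁, S₂ nonempty closed convex disjoint sets, α₁, α₂ > 0 with α₁+α₂ = 1, and p > 1. Then the set A of minimizers of x ↦ α₁ d(x,S₁)^p + α₂ d(x,S₂)^p is disjoint from S₁ ∪ S₂. -/
/-! A point `x ∈ S₁ \ S₂` is not a minimizer: moving a fraction `t` of the way towards a point
`z ∈ S₂` nearly nearest to `x` changes the objective from `α₂ d(x,S₂)^p` to at most about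
`(α₁ t^p + α₂ (1-t)^p) d(x,S₂)^p`, and since `p > 1` this factor has slope `-p α₂ < 0` at
`t = 0`. Closedness of `S₂` makes `d(x,S₂)` positive. -/

open Metric Filter Topology

theorem exists_mul_rpow_add_mul_one_sub_rpow_lt (a : ℝ) {b p : ℝ} (hb : 0 < b) (hp : 1 < p) :
    ∃ t ∈ Set.Ioo (0 : ℝ) 1, a * t ^ p + b * (1 - t) ^ p < b := by
  have hlim : ContinuousAt (fun t : ℝ => a * t ^ (p - 1)) 0 :=
    continuousAt_const.mul (Real.continuousAt_rpow_const _ _ (Or.inr (by linarith)))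
  have hsmall : ∀ᶠ t in 𝓝 (0 : ℝ), a * t ^ (p - 1) < b ∧ t < 1 := by
    refine (hlim.eventually (gt_mem_nhds ?_)).and (gt_mem_nhds one_pos)
    simpa [Real.zero_rpow (by linarith : p - 1 ≠ 0)] using hb
  obtain ⟨t, ht0, hslope, ht1⟩ := hsmall.exists_gt
  refine ⟨t, ⟨ht0, ht1⟩, ?_⟩
  have hfirst : a * t ^ p < b * t := by
    have hsplit : t ^ p = t ^ (p - 1) * t := by rw [← Real.rpow_add_one ht0.ne', sub_add_cancel]
    rw [hsplit]
    nlinarith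
  have hsecond : (1 - t) ^ p ≤ 1 - t :=
    Real.rpow_le_self_of_le_one (by linarith) (by linarith) hp.le
  nlinarith

section NormedSpace

variable {X : Type*} [NormedAddCommGroup X] [NormedSpace ℝ X]

theorem weighted_infDist_rpow_lineMap_le {S T : Set X} {x z : X} (hx : x ∈ S) (hz : z ∈ T)
    {a b t p : ℝ} (ha : 0 ≤ a) (hb : 0 ≤ b) (ht : t ∈ Set.Icc (0 : ℝ) 1) (hp : 0 ≤ p) :
    a * infDist (AffineMap.lineMap x z t) S ^ p + b * infDist (AffineMap.lineMap x z t) T ^ p ≤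
      (a * t ^ p + b * (1 - t) ^ p) * dist x z ^ p := by
  have hS : infDist (AffineMap.lineMap x z t) S ≤ t * dist x z := by
    simpa [dist_lineMap_left, abs_of_nonneg ht.1]
      using infDist_le_dist_of_mem (x := AffineMap.lineMap x z t) hx
  have hT : infDist (AffineMap.lineMap x z t) T ≤ (1 - t) * dist x z := by
    simpa [dist_lineMap_right, abs_of_nonneg (sub_nonneg.2 ht.2)]
      using infDist_le_dist_of_mem (x := AffineMap.lineMap x z t) hz
  calc a * infDist (AffineMap.lineMap x z t) S ^ p + b * infDist (AffineMap.lineMap x z t) T ^ p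
      ≤ a * (t * dist x z) ^ p + b * ((1 - t) * dist x z) ^ p := by
        gcongr <;> exact infDist_nonneg
    _ = (a * t ^ p + b * (1 - t) ^ p) * dist x z ^ p := by
        rw [Real.mul_rpow ht.1 dist_nonneg, Real.mul_rpow (sub_nonneg.2 ht.2) dist_nonneg]
        ring

theorem exists_weighted_infDist_rpow_lt_of_mem_of_notMem {S T : Set X} {x : X}
    (hxS : x ∈ S) (hxT : x ∉ T) (hT : IsClosed T) (hTne : T.Nonempty)
    {a b p : ℝ} (ha : 0 ≤ a) (hb : 0 < b) (hp : 1 < p) :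
    ∃ y, a * infDist y S ^ p + b * infDist y T ^ p <
      a * infDist x S ^ p + b * infDist x T ^ p := by
  have hp0 : p ≠ 0 := by positivity
  set d := infDist x T
  have hd : 0 < d := (hT.notMem_iff_infDist_pos hTne).1 hxT
  obtain ⟨t, ht, hg⟩ := exists_mul_rpow_add_mul_one_sub_rpow_lt a hb hp
  set g := a * t ^ p + b * (1 - t) ^ p
  have hg0 : 0 ≤ g := by have := ht.1.le; have := ht.2.le; positivity
  have hgd : g * d ^ p < b * d ^ p := mul_lt_mul_of_pos_right hg (by positivity)
  obtain ⟨r, hdr, hr⟩ : ∃ r, d < r ∧ g * r ^ p < b * d ^ p :=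
    ((continuousAt_const.mul (Real.continuousAt_rpow_const _ _ (Or.inl hd.ne'))).eventually
      (gt_mem_nhds hgd)).exists_gt
  obtain ⟨z, hz, hxz⟩ := (infDist_lt_iff hTne).1 hdr
  refine ⟨AffineMap.lineMap x z t, ?_⟩
  calc _ ≤ g * dist x z ^ p :=
        weighted_infDist_rpow_lineMap_le hxS hz ha hb.le (Set.Ioo_subset_Icc_self ht)
          (by positivity)
    _ ≤ g * r ^ p := by gcongr
    _ < b * d ^ p := hr
    _ = a * infDist x S ^ p + b * d ^ p := by
        rw [infDist_zero_of_mem hxS, Real.zero_rpow hp0, mul_zero, zero_add]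

end NormedSpace

theorem argmin_dist_pow_disjoint_general {X : Type*} [NormedAddCommGroup X]
    [InnerProductSpace ℝ X]
    (S₁ S₂ : Set X) (h₁ : S₁.Nonempty) (h₂ : S₂.Nonempty)
    (hc₁ : IsClosed S₁) (hc₂ : IsClosed S₂)
    (hdisj : S₁ ∩ S₂ = ∅)
    (α₁ α₂ : ℝ) (hα₁ : 0 < α₁) (hα₂ : 0 < α₂)
    (p : ℝ) (hp : 1 < p) :
    {x : X | ∀ y : X, α₁ * infDist x S₁ ^ p + α₂ * infDist x S₂ ^ p ≤
        α₁ * infDist y S₁ ^ p + α₂ * infDist y S₂ ^ p} ∩ (S₁ ∪ S₂) = ∅ := by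
  refine Set.eq_empty_of_forall_notMem fun x ⟨hmin, hx⟩ => ?_
  rcases hx with hx₁ | hx₂
  · obtain ⟨y, hy⟩ := exists_weighted_infDist_rpow_lt_of_mem_of_notMem hx₁
      (fun hx₂ => hdisj.subset ⟨hx₁, hx₂⟩) hc₂ h₂ hα₁.le hα₂ hp
    linarith [hmin y]
  · obtain ⟨y, hy⟩ := exists_weighted_infDist_rpow_lt_of_mem_of_notMem hx₂
      (fun hx₁ => hdisj.subset ⟨hx₁, hx₂⟩) hc₁ h₁ hα₂.le hα₁ hp
    linarith [hmin y]

theorem argmin_dist_pow_disjoint {X : Type*} [NormedAddCommGroup X]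
    [InnerProductSpace ℝ X] [CompleteSpace X]
    (S₁ S₂ : Set X) (h₁ : S₁.Nonempty) (h₂ : S₂.Nonempty)
    (hc₁ : IsClosed S₁) (hc₂ : IsClosed S₂)
    (hv₁ : Convex ℝ S₁) (hv₂ : Convex ℝ S₂) (hdisj : S₁ ∩ S₂ = ∅)
    (α₁ α₂ : ℝ) (hα₁ : 0 < α₁) (hα₂ : 0 < α₂) (hsum : α₁ + α₂ = 1)
    (p : ℝ) (hp : 1 < p) :
    {x : X | ∀ y : X, α₁ * infDist x S₁ ^ p + α₂ * infDist x S₂ ^ p ≤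
        α₁ * infDist y S₁ ^ p + α₂ * infDist y S₂ ^ p} ∩ (S₁ ∪ S₂) = ∅ :=
  argmin_dist_pow_disjoint_general S₁ S₂ h₁ h₂ hc₁ hc₂ hdisj α₁ α₂ hα₁ hα₂ p hp
end

section
/- Let X be a Hilbert space, S₁, S₂ nonempty closed convex disjoint sets, α₁, α₂ > 0 with α₁+α₂ = 1, and p > 1. Then the set of minimizers of x ↦ α₁ d(x,S₁)^p + α₂ d(x,S₂)^p coincides with the set of fixed points of the map x ↦ (α₁^{1/(p−1)} P₁(x) + α₂^{1/(p−1)} P₂(x)) / (α₁^{1/(p−1)} + α₂^{1/(p−1)}), where P_i is the metric projection onto S_i. -/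
/-
Membership of `x` in either set is a vector equation in `wᵢ = x - Pᵢ x`; write
`J w = ‖w‖ ^ (p - 2) • w`.

Minimality of `f = α₁ d(·,S₁)^p + α₂ d(·,S₂)^p` at `x` is equivalent to the stationarity equation
`α₁ J w₁ + α₂ J w₂ = 0`. Necessity: the smooth function `z ↦ Σ αᵢ ‖z - Pᵢ x‖ ^ p` majorizes `f` and
touches it at `x`, so `x` minimizes it and its derivative vanishes there. Sufficiency: the
obtuse-angle characterization of `Pᵢ x` together with the tangent-line inequality for `t ↦ t ^ p`
gives the subgradient inequality `d(y,S)^p ≥ d(x,S)^p + p ⟪J(x - P x), y - x⟫`.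

The fixed-point equation is `α₁ ^ q • w₁ + α₂ ^ q • w₂ = 0` with `q = 1 / (p - 1)`. The odd,
injective map `v ↦ ‖v‖ ^ (q - 1) • v` inverts `J` and sends `α • J w` to `α ^ q • w`, so it carries
the stationarity equation to the fixed-point equation and back.
-/

open Metric
open scoped RealInnerProductSpace

theorem rpow_add_mul_rpow_sub_one_mul_sub_le {p d t : ℝ} (hp : 1 ≤ p) (hd : 0 < d) (ht : 0 ≤ t) :
    d ^ p + p * d ^ (p - 1) * (t - d) ≤ t ^ p := by
  have hbern := one_add_mul_self_le_rpow_one_add (s := t / d - 1)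
    (by linarith [div_nonneg ht hd.le]) hp
  rw [add_sub_cancel, Real.div_rpow ht hd.le, le_div_iff₀ (by positivity)] at hbern
  calc d ^ p + p * d ^ (p - 1) * (t - d) = (1 + p * (t / d - 1)) * d ^ p := by
        rw [Real.rpow_sub_one hd.ne']; field_simp
    _ ≤ t ^ p := hbern

section

variable {E : Type*}

noncomputable def normRpowSMul [SeminormedAddCommGroup E] [NormedSpace ℝ E] (r : ℝ) (v : E) : E :=
  ‖v‖ ^ r • v

section NormRpowSMul

variable [NormedAddCommGroup E] [NormedSpace ℝ E] {r s : ℝ}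

theorem normRpowSMul_neg (v : E) : normRpowSMul r (-v) = -normRpowSMul r v := by
  simp [normRpowSMul]

theorem normRpowSMul_smul {c : ℝ} (hc : 0 < c) (v : E) :
    normRpowSMul r (c • v) = c ^ (r + 1) • normRpowSMul r v := by
  simp only [normRpowSMul, norm_smul, Real.norm_of_nonneg hc.le,
    Real.mul_rpow hc.le (norm_nonneg v), smul_smul, Real.rpow_add_one hc.ne']
  ring_nf

theorem normRpowSMul_normRpowSMul (h : (r + 1) * (s + 1) = 1) (v : E) :
    normRpowSMul s (normRpowSMul r v) = v := by
  rcases eq_or_ne v 0 with rfl | hv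
  · simp [normRpowSMul]
  have hv' : 0 < ‖v‖ := norm_pos_iff.mpr hv
  have hexp : (r + 1) * s + r = 0 := by linear_combination h
  rw [normRpowSMul, normRpowSMul, norm_smul, Real.norm_of_nonneg (by positivity),
    ← Real.rpow_add_one hv'.ne', smul_smul, ← Real.rpow_mul hv'.le,
    ← Real.rpow_add hv', hexp, Real.rpow_zero, one_smul]

theorem normRpowSMul_injective (hs : s + 1 ≠ 0) : Function.Injective (normRpowSMul (E := E) s) :=
  Function.LeftInverse.injective (g := normRpowSMul (1 / (s + 1) - 1))
    (normRpowSMul_normRpowSMul (by field_simp; ring))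

theorem normRpowSMul_add_normRpowSMul_eq_zero_iff (hs : s + 1 ≠ 0) {u v : E} :
    normRpowSMul s u + normRpowSMul s v = 0 ↔ u + v = 0 := by
  rw [add_eq_zero_iff_eq_neg, add_eq_zero_iff_eq_neg, ← normRpowSMul_neg,
    (normRpowSMul_injective hs).eq_iff]

end NormRpowSMul

theorem eq_inv_smul_add_smul_iff {𝕜 : Type*} [Field 𝕜] [AddCommGroup E] [Module 𝕜 E] {a b : 𝕜}
    (hab : a + b ≠ 0)
    (x u v : E) :
    x = (a + b)⁻¹ • (a • u + b • v) ↔ a • (x - u) + b • (x - v) = 0 := by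
  rw [eq_inv_smul_iff₀ hab, smul_sub, smul_sub, sub_add_sub_comm, ← add_smul, sub_eq_zero, eq_comm]

section Projection

variable [NormedAddCommGroup E] [InnerProductSpace ℝ E] {S : Set E} {x y₀ : E}

theorem inner_sub_le_norm_mul_infDist (hS : Convex ℝ S) (hy₀ : y₀ ∈ S)
    (hdist : dist x y₀ = infDist x S) (y : E) :
    ⟪x - y₀, y - y₀⟫ ≤ ‖x - y₀‖ * infDist y S := by
  have hobtuse : ∀ s ∈ S, ⟪x - y₀, s - y₀⟫ ≤ 0 := by
    rw [← norm_eq_iInf_iff_real_inner_le_zero hS hy₀, ← dist_eq_norm, hdist, infDist_eq_iInf]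
    simp only [dist_eq_norm]
  have : Nonempty S := ⟨⟨y₀, hy₀⟩⟩
  rw [infDist_eq_iInf, Real.mul_iInf_of_nonneg (norm_nonneg _)]
  refine le_ciInf fun s => ?_
  calc ⟪x - y₀, y - y₀⟫ = ⟪x - y₀, y - s⟫ + ⟪x - y₀, s - y₀⟫ := by
        rw [← inner_add_right, sub_add_sub_cancel]
    _ ≤ ‖x - y₀‖ * ‖y - s‖ + 0 := add_le_add (real_inner_le_norm _ _) (hobtuse s s.2)
    _ = ‖x - y₀‖ * dist y s := by rw [add_zero, dist_eq_norm]

theorem infDist_rpow_add_inner_le (hS : Convex ℝ S) (hy₀ : y₀ ∈ S)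
    (hdist : dist x y₀ = infDist x S) {p : ℝ} (hp : 1 ≤ p) (y : E) :
    infDist x S ^ p + p * ⟪normRpowSMul (p - 2) (x - y₀), y - x⟫ ≤ infDist y S ^ p := by
  rw [← hdist, dist_eq_norm]
  rcases (norm_nonneg (x - y₀)).eq_or_lt with hd | hd
  · rw [← hd, norm_eq_zero.mp hd.symm]
    simp [normRpowSMul, Real.zero_rpow (by linarith : p ≠ 0), Real.rpow_nonneg infDist_nonneg]
  set d := ‖x - y₀‖
  have hinner : ⟪x - y₀, y - x⟫ ≤ d * (infDist y S - d) := by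
    have hsplit : ⟪x - y₀, y - x⟫ = ⟪x - y₀, y - y₀⟫ - d * d := by
      rw [← sub_sub_sub_cancel_right y x y₀, inner_sub_right, real_inner_self_eq_norm_mul_norm]
    linarith [inner_sub_le_norm_mul_infDist hS hy₀ hdist y]
  calc d ^ p + p * ⟪normRpowSMul (p - 2) (x - y₀), y - x⟫
      = d ^ p + p * d ^ (p - 2) * ⟪x - y₀, y - x⟫ := by
        rw [normRpowSMul, real_inner_smul_left]; ring
    _ ≤ d ^ p + p * d ^ (p - 2) * (d * (infDist y S - d)) := by gcongr
    _ = d ^ p + p * d ^ (p - 1) * (infDist y S - d) := by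
        rw [show p - 1 = p - 2 + 1 by ring, Real.rpow_add_one hd.ne']; ring
    _ ≤ infDist y S ^ p := rpow_add_mul_rpow_sub_one_mul_sub_le hp hd infDist_nonneg

end Projection

section Optimality

variable [NormedAddCommGroup E] [InnerProductSpace ℝ E]

theorem hasFDerivAt_norm_sub_rpow (x c : E) {p : ℝ} (hp : 1 < p) :
    HasFDerivAt (fun z : E ↦ ‖z - c‖ ^ p) ((p * ‖x - c‖ ^ (p - 2)) • innerSL ℝ (x - c)) x := by
  have := (hasFDerivAt_norm_rpow (x - c) hp).comp x (hasFDerivAt_sub_const c)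
  rwa [ContinuousLinearMap.comp_id] at this

theorem forall_le_iff_smul_normRpowSMul_add_eq_zero {S₁ S₂ : Set E}
    (hS₁ : Convex ℝ S₁) (hS₂ : Convex ℝ S₂) {x y₁ y₂ : E} (hy₁ : y₁ ∈ S₁) (hy₂ : y₂ ∈ S₂)
    (hdist₁ : dist x y₁ = infDist x S₁) (hdist₂ : dist x y₂ = infDist x S₂)
    {α₁ α₂ p : ℝ} (hα₁ : 0 ≤ α₁) (hα₂ : 0 ≤ α₂) (hp : 1 < p) :
    (∀ y, α₁ * infDist x S₁ ^ p + α₂ * infDist x S₂ ^ p ≤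
        α₁ * infDist y S₁ ^ p + α₂ * infDist y S₂ ^ p) ↔
      α₁ • normRpowSMul (p - 2) (x - y₁) + α₂ • normRpowSMul (p - 2) (x - y₂) = 0 := by
  set G := α₁ • normRpowSMul (p - 2) (x - y₁) + α₂ • normRpowSMul (p - 2) (x - y₂)
  constructor
  · intro hmin
    have hlocal : IsLocalMin (fun z ↦ α₁ * ‖z - y₁‖ ^ p + α₂ * ‖z - y₂‖ ^ p) x := by
      refine Filter.Eventually.of_forall fun z ↦ ?_
      simp only [← dist_eq_norm, hdist₁, hdist₂]
      refine (hmin z).trans ?_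
      have h₁ : infDist z S₁ ≤ dist z y₁ := infDist_le_dist_of_mem hy₁
      have h₂ : infDist z S₂ ≤ dist z y₂ := infDist_le_dist_of_mem hy₂
      gcongr <;> exact infDist_nonneg
    have hderiv := hlocal.hasFDerivAt_eq_zero
      (((hasFDerivAt_norm_sub_rpow x y₁ hp).const_mul α₁).add
        ((hasFDerivAt_norm_sub_rpow x y₂ hp).const_mul α₂))
    have hG : ∀ v, p * ⟪G, v⟫ = 0 := fun v ↦ by
      have := congrArg (fun L ↦ L v) hderiv
      simp only [map_sub, add_apply, smul_apply, sub_apply, coe_innerSL_apply, smul_eq_mul,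
        zero_apply] at this
      simp only [G, normRpowSMul, inner_add_left, inner_sub_left, real_inner_smul_left]
      linear_combination this
    simpa [(by linarith : p ≠ 0)] using hG G
  · intro hG y
    have h₁ := infDist_rpow_add_inner_le hS₁ hy₁ hdist₁ hp.le y
    have h₂ := infDist_rpow_add_inner_le hS₂ hy₂ hdist₂ hp.le y
    have hG' : ⟪G, y - x⟫ = 0 := by rw [hG, inner_zero_left]
    simp only [G, inner_add_left, real_inner_smul_left] at hG'
    nlinarith [mul_le_mul_of_nonneg_left h₁ hα₁, mul_le_mul_of_nonneg_left h₂ hα₂]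

end Optimality

end

theorem argmin_eq_fixedPoints_general {X : Type*} [NormedAddCommGroup X]
    [InnerProductSpace ℝ X]
    (S₁ S₂ : Set X)
    (hv₁ : Convex ℝ S₁) (hv₂ : Convex ℝ S₂)
    (α₁ α₂ : ℝ) (hα₁ : 0 < α₁) (hα₂ : 0 < α₂)
    (p : ℝ) (hp : 1 < p)
    (P₁ P₂ : X → X)
    (hP₁ : ∀ x, P₁ x ∈ S₁ ∧ dist x (P₁ x) = infDist x S₁)
    (hP₂ : ∀ x, P₂ x ∈ S₂ ∧ dist x (P₂ x) = infDist x S₂) :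
    {x : X | ∀ y : X, α₁ * infDist x S₁ ^ p + α₂ * infDist x S₂ ^ p ≤
        α₁ * infDist y S₁ ^ p + α₂ * infDist y S₂ ^ p} =
      {x : X | x = (α₁ ^ (1 / (p - 1)) + α₂ ^ (1 / (p - 1)))⁻¹ •
        (α₁ ^ (1 / (p - 1)) • P₁ x + α₂ ^ (1 / (p - 1)) • P₂ x)} := by
  set q := 1 / (p - 1)
  have hq : 0 < q := by simp only [q]; bound
  have hpq : (p - 1) * q = 1 := by simp only [q]; field_simp [(by linarith : p - 1 ≠ 0)]
  have hinverse : ∀ α : ℝ, 0 < α → ∀ w : X,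
      normRpowSMul (q - 1) (α • normRpowSMul (p - 2) w) = α ^ q • w := by
    intro α hα w
    rw [normRpowSMul_smul hα, sub_add_cancel,
      normRpowSMul_normRpowSMul (by linear_combination hpq)]
  ext x
  obtain ⟨hm₁, hd₁⟩ := hP₁ x
  obtain ⟨hm₂, hd₂⟩ := hP₂ x
  rw [Set.mem_ofPred_eq, Set.mem_ofPred_eq,
    forall_le_iff_smul_normRpowSMul_add_eq_zero hv₁ hv₂ hm₁ hm₂ hd₁ hd₂ hα₁.le hα₂.le hp,
    ← normRpowSMul_add_normRpowSMul_eq_zero_iff (s := q - 1) (by simpa using hq.ne'),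
    hinverse α₁ hα₁, hinverse α₂ hα₂, eq_inv_smul_add_smul_iff (by positivity)]

theorem argmin_eq_fixedPoints {X : Type*} [NormedAddCommGroup X]
    [InnerProductSpace ℝ X] [CompleteSpace X]
    (S₁ S₂ : Set X) (h₁ : S₁.Nonempty) (h₂ : S₂.Nonempty)
    (hc₁ : IsClosed S₁) (hc₂ : IsClosed S₂)
    (hv₁ : Convex ℝ S₁) (hv₂ : Convex ℝ S₂) (hdisj : S₁ ∩ S₂ = ∅)
    (α₁ α₂ : ℝ) (hα₁ : 0 < α₁) (hα₂ : 0 < α₂) (hsum : α₁ + α₂ = 1)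
    (p : ℝ) (hp : 1 < p)
    (P₁ P₂ : X → X)
    (hP₁ : ∀ x, P₁ x ∈ S₁ ∧ dist x (P₁ x) = infDist x S₁)
    (hP₂ : ∀ x, P₂ x ∈ S₂ ∧ dist x (P₂ x) = infDist x S₂) :
    {x : X | ∀ y : X, α₁ * infDist x S₁ ^ p + α₂ * infDist x S₂ ^ p ≤
        α₁ * infDist y S₁ ^ p + α₂ * infDist y S₂ ^ p} =
      {x : X | x = (α₁ ^ (1 / (p - 1)) + α₂ ^ (1 / (p - 1)))⁻¹ •
        (α₁ ^ (1 / (p - 1)) • P₁ x + α₂ ^ (1 / (p - 1)) • P₂ x)} :=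
  argmin_eq_fixedPoints_general S₁ S₂ hv₁ hv₂ α₁ α₂ hα₁ hα₂ p hp P₁ P₂ hP₁ hP₂
end

section
/- Let X be a Hilbert space, S₁,…,S_m nonempty closed convex sets with ∩ᵢS_i = ∅, α_i > 0 with Σα_i = 1, and p ≥ 2. Then for each i, the displacement mapping I − P_i (where P_i is the metric projection onto S_i) is constant on the set A(α,p) = argmin_{x∈X} Σᵢ α_i d(x,S_i)^p; that is, x − P_i(x) = y − P_i(y) for all x, y ∈ A(α,p). -/
/-!
Let `x`, `y` be minimizers and `z` their midpoint. Since `midpoint (P_i x) (P_i y) ∈ S_i`,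
`d(z, S_i) ≤ ‖(x - P_i x) + (y - P_i y)‖ / 2 ≤ (d(x, S_i) + d(y, S_i)) / 2`, so by convexity of
`t ↦ t ^ p` the objective at `z` is at most its common value at `x` and `y`. Minimality of `z`
turns every termwise bound into an equality; strict convexity of `t ↦ t ^ p` then gives
`d(x, S_i) = d(y, S_i) = d(z, S_i)`, and equality in the triangle inequality of the strictly convex
norm gives `x - P_i x = y - P_i y`.
-/

open Metric

theorem eq_average_of_sum_mul_le {ι : Type*} [Fintype ι] {α a b c : ι → ℝ}
    (hα : ∀ i, 0 < α i) (hc : ∀ i, c i ≤ (a i + b i) / 2)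
    (ha : ∑ i, α i * a i ≤ ∑ i, α i * c i) (hb : ∑ i, α i * b i ≤ ∑ i, α i * c i) (i : ι) :
    c i = (a i + b i) / 2 := by
  have hle : ∀ j ∈ Finset.univ, α j * c j ≤ α j * ((a j + b j) / 2) :=
    fun j _ ↦ mul_le_mul_of_nonneg_left (hc j) (hα j).le
  have hsum : ∑ j, α j * ((a j + b j) / 2) = (∑ j, α j * a j + ∑ j, α j * b j) / 2 := by
    simp only [mul_div_assoc', mul_add, Finset.sum_div, Finset.sum_add_distrib, add_div]
  have heq : ∑ j, α j * c j = ∑ j, α j * ((a j + b j) / 2) :=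
    le_antisymm (Finset.sum_le_sum hle) (by linarith)
  exact mul_left_cancel₀ (hα i).ne' ((Finset.sum_eq_sum_iff_of_le hle).1 heq i (Finset.mem_univ i))

namespace Real

theorem rpow_le_average_rpow {p a b c : ℝ} (hp : 1 ≤ p) (ha : 0 ≤ a) (hb : 0 ≤ b) (hc : 0 ≤ c)
    (hcab : c ≤ (a + b) / 2) : c ^ p ≤ (a ^ p + b ^ p) / 2 := by
  have hconv := (convexOn_rpow hp).2 ha hb (by norm_num : (0 : ℝ) ≤ 1 / 2)
    (by norm_num : (0 : ℝ) ≤ 1 / 2) (by norm_num)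
  simp only [smul_eq_mul] at hconv
  calc c ^ p ≤ ((a + b) / 2) ^ p := rpow_le_rpow hc hcab (by linarith)
    _ = (1 / 2 * a + 1 / 2 * b) ^ p := by ring_nf
    _ ≤ 1 / 2 * a ^ p + 1 / 2 * b ^ p := hconv
    _ = (a ^ p + b ^ p) / 2 := by ring

theorem eq_of_average_rpow_le_rpow {p a b c : ℝ} (hp : 1 < p) (ha : 0 ≤ a) (hb : 0 ≤ b)
    (hc : 0 ≤ c) (hcab : c ≤ (a + b) / 2) (h : (a ^ p + b ^ p) / 2 ≤ c ^ p) : a = b ∧ c = a := by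
  have hab : a = b := by
    by_contra hne
    have hstrict := (strictConvexOn_rpow hp).2 ha hb hne (by norm_num : (0 : ℝ) < 1 / 2)
      (by norm_num : (0 : ℝ) < 1 / 2) (by norm_num)
    simp only [smul_eq_mul] at hstrict
    have hmono : c ^ p ≤ ((a + b) / 2) ^ p := rpow_le_rpow hc hcab (by linarith)
    have : ((a + b) / 2) ^ p = (1 / 2 * a + 1 / 2 * b) ^ p := by ring_nf
    linarith
  subst hab
  have hca : c ≤ a := by linarith
  have hac : a ≤ c := (rpow_le_rpow_iff ha hc (by linarith : 0 < p)).1 (by linarith)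
  exact ⟨rfl, le_antisymm hca hac⟩

end Real

namespace Convex

variable {E : Type*} [NormedAddCommGroup E] [NormedSpace ℝ E] {S : Set E} {a b : E}

theorem infDist_midpoint_le (hS : Convex ℝ S) (ha : a ∈ S) (hb : b ∈ S) (x y : E) :
    infDist (midpoint ℝ x y) S ≤ (dist x a + dist y b) / 2 :=
  (infDist_le_dist_of_mem (hS.midpoint_mem ha hb)).trans (dist_midpoint_midpoint_le x y a b)

theorem sub_eq_sub_of_dist_le_infDist_midpoint [StrictConvexSpace ℝ E] (hS : Convex ℝ S)
    (ha : a ∈ S) (hb : b ∈ S) {x y : E} (hxy : dist x a = dist y b)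
    (h : dist x a ≤ infDist (midpoint ℝ x y) S) : x - a = y - b := by
  have hmid : ‖(x - a) + (y - b)‖ = 2 * dist (midpoint ℝ x y) (midpoint ℝ a b) := by
    rw [dist_eq_norm, ← vsub_eq_sub (midpoint ℝ x y), midpoint_vsub_midpoint, midpoint_eq_smul_add,
      norm_smul]
    norm_num
    ring
  have hle : dist x a ≤ dist (midpoint ℝ x y) (midpoint ℝ a b) :=
    h.trans (infDist_le_dist_of_mem (hS.midpoint_mem ha hb))
  refine eq_of_norm_eq_of_norm_add_eq (by rwa [← dist_eq_norm, ← dist_eq_norm]) ?_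
  apply le_antisymm (norm_add_le _ _)
  rw [← dist_eq_norm, ← dist_eq_norm, hmid]
  linarith

end Convex

theorem displacement_constant_on_argmin_general {X : Type*} [NormedAddCommGroup X]
    [InnerProductSpace ℝ X] {m : ℕ}
    (S : Fin m → Set X) (hconv : ∀ i, Convex ℝ (S i))
    (α : Fin m → ℝ) (hα : ∀ i, 0 < α i)
    (p : ℝ) (hp : 2 ≤ p)
    (P : Fin m → X → X)
    (hP : ∀ i x, P i x ∈ S i ∧ dist x (P i x) = infDist x (S i)) :
    ∀ x ∈ {z : X | ∀ y : X, ∑ i, α i * infDist z (S i) ^ p ≤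
        ∑ i, α i * infDist y (S i) ^ p},
      ∀ y ∈ {z : X | ∀ w : X, ∑ i, α i * infDist z (S i) ^ p ≤
        ∑ i, α i * infDist w (S i) ^ p},
      ∀ i, x - P i x = y - P i y := by
  intro x hx y hy i
  set z := midpoint ℝ x y
  have hmid : ∀ j, infDist z (S j) ≤ (infDist x (S j) + infDist y (S j)) / 2 := fun j ↦ by
    simpa only [(hP j x).2, (hP j y).2] using (hconv j).infDist_midpoint_le (hP j x).1 (hP j y).1 x y
  have hpow : ∀ j, infDist z (S j) ^ p ≤ (infDist x (S j) ^ p + infDist y (S j) ^ p) / 2 :=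
    fun j ↦ Real.rpow_le_average_rpow (by linarith) infDist_nonneg infDist_nonneg infDist_nonneg
      (hmid j)
  have heq := eq_average_of_sum_mul_le hα hpow (hx z) (hy z) i
  obtain ⟨hxy, hzx⟩ := Real.eq_of_average_rpow_le_rpow (by linarith) infDist_nonneg
    infDist_nonneg infDist_nonneg (hmid i) heq.ge
  exact (hconv i).sub_eq_sub_of_dist_le_infDist_midpoint (hP i x).1 (hP i y).1
    (by rw [(hP i x).2, (hP i y).2, hxy]) (by rw [(hP i x).2, hzx])

theorem displacement_constant_on_argmin {X : Type*} [NormedAddCommGroup X]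
    [InnerProductSpace ℝ X] [CompleteSpace X] {m : ℕ}
    (S : Fin m → Set X) (hne : ∀ i, (S i).Nonempty)
    (hcl : ∀ i, IsClosed (S i)) (hconv : ∀ i, Convex ℝ (S i))
    (hempty : (⋂ i, S i) = ∅)
    (α : Fin m → ℝ) (hα : ∀ i, 0 < α i) (hsum : ∑ i, α i = 1)
    (p : ℝ) (hp : 2 ≤ p)
    (P : Fin m → X → X)
    (hP : ∀ i x, P i x ∈ S i ∧ dist x (P i x) = infDist x (S i)) :
    ∀ x ∈ {z : X | ∀ y : X, ∑ i, α i * infDist z (S i) ^ p ≤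
        ∑ i, α i * infDist y (S i) ^ p},
      ∀ y ∈ {z : X | ∀ w : X, ∑ i, α i * infDist z (S i) ^ p ≤
        ∑ i, α i * infDist w (S i) ^ p},
      ∀ i, x - P i x = y - P i y :=
  displacement_constant_on_argmin_general S hconv α hα p hp P hP
end

section
/- Let g_i : ℝⁿ → ℝ be convex functions, i = 1,…,m, p ≥ 2, and b̄ ∈ ℝᵐ such that the system {g_i(x) ≤ b̄_i, i=1,…,m} is inconsistent. Let Θ_c = {b ∈ ℝᵐ : the system {g_i(x) ≤ b_i} is consistent}. Then the distance (in the p-norm on ℝᵐ) from b̄ to Θ_c satisfies d_p(b̄, Θ_c)^p = inf_{x∈ℝⁿ} Σᵢ [g_i(x) − b̄_i]₊^p, where [t]₊ = max(t,0). -/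
theorem distance_to_feasibility {n m : ℕ}
    (g : Fin m → (Fin n → ℝ) → ℝ)
    (hg : ∀ i, ConvexOn ℝ Set.univ (g i))
    (p : ℝ) (hp : 2 ≤ p)
    (bbar : Fin m → ℝ)
    (hincons : ¬ ∃ x : Fin n → ℝ, ∀ i, g i x ≤ bbar i) :
    (sInf {r : ℝ | ∃ b : Fin m → ℝ, (∃ x : Fin n → ℝ, ∀ i, g i x ≤ b i) ∧
        r = (∑ i, |bbar i - b i| ^ p) ^ (1 / p)}) ^ p =
      sInf {r : ℝ | ∃ x : Fin n → ℝ, r = ∑ i, max (g i x - bbar i) 0 ^ p} := by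
  have hp0 : (0:ℝ) < p := by linarith
  have hip : (0:ℝ) < 1 / p := by positivity
  set S : Set ℝ := {r : ℝ | ∃ b : Fin m → ℝ, (∃ x : Fin n → ℝ, ∀ i, g i x ≤ b i) ∧
      r = ∑ i, |bbar i - b i| ^ p} with hSdef
  set A : Set ℝ := {r : ℝ | ∃ b : Fin m → ℝ, (∃ x : Fin n → ℝ, ∀ i, g i x ≤ b i) ∧
      r = (∑ i, |bbar i - b i| ^ p) ^ (1 / p)} with hAdef
  set B : Set ℝ := {r : ℝ | ∃ x : Fin n → ℝ, r = ∑ i, max (g i x - bbar i) 0 ^ p} with hBdef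
  have hSnonneg : ∀ r ∈ S, (0:ℝ) ≤ r := by
    rintro r ⟨b, _, rfl⟩
    exact Finset.sum_nonneg fun i _ => Real.rpow_nonneg (abs_nonneg _) _
  have hSne : S.Nonempty := ⟨_, fun i => g i 0, ⟨0, fun i => le_rfl⟩, rfl⟩
  have hSbdd : BddBelow S := ⟨0, hSnonneg⟩
  have hBnonneg : ∀ r ∈ B, (0:ℝ) ≤ r := by
    rintro r ⟨x, rfl⟩
    exact Finset.sum_nonneg fun i _ => Real.rpow_nonneg (le_max_right _ _) _
  have hBne : B.Nonempty := ⟨_, 0, rfl⟩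
  have hBbdd : BddBelow B := ⟨0, hBnonneg⟩
  -- B ⊆ S
  have hBS : B ⊆ S := by
    rintro r ⟨x, rfl⟩
    refine ⟨fun i => max (g i x) (bbar i), ⟨x, fun i => le_max_left _ _⟩, ?_⟩
    refine Finset.sum_congr rfl fun i _ => ?_
    congr 1
    rcases le_total (g i x) (bbar i) with h | h
    · simp [max_eq_right h, max_eq_right (sub_nonpos.mpr h)]
    · rw [show (fun i => g i x ⊔ bbar i) i = g i x ⊔ bbar i from rfl, max_eq_left h,
        max_eq_left (sub_nonneg.mpr h), abs_sub_comm, abs_of_nonneg (sub_nonneg.mpr h)]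
  -- sInf S = sInf B
  have hSB : sInf S = sInf B := by
    refine le_antisymm (le_csInf hBne fun r hr => csInf_le hSbdd (hBS hr)) ?_
    refine le_csInf hSne ?_
    rintro r ⟨b, ⟨x, hx⟩, rfl⟩
    refine le_trans (csInf_le hBbdd ⟨x, rfl⟩) ?_
    refine Finset.sum_le_sum fun i _ => ?_
    refine Real.rpow_le_rpow (le_max_right _ _) ?_ hp0.le
    rw [max_le_iff, abs_sub_comm]
    constructor
    · calc g i x - bbar i ≤ b i - bbar i := by linarith [hx i]
        _ ≤ |b i - bbar i| := le_abs_self _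
    · exact abs_nonneg _
  -- A is the image of S under t ↦ (max t 0) ^ (1/p)
  have hA : A = (fun t : ℝ => (max t 0) ^ (1/p)) '' S := by
    ext r
    constructor
    · rintro ⟨b, hb, rfl⟩
      refine ⟨∑ i, |bbar i - b i| ^ p, ⟨b, hb, rfl⟩, ?_⟩
      dsimp only
      rw [max_eq_left (Finset.sum_nonneg fun i _ => Real.rpow_nonneg (abs_nonneg _) _)]
    · rintro ⟨s, ⟨b, hb, rfl⟩, rfl⟩
      refine ⟨b, hb, ?_⟩
      dsimp only
      rw [max_eq_left (Finset.sum_nonneg fun i _ => Real.rpow_nonneg (abs_nonneg _) _)]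
  have hmono : Monotone (fun t : ℝ => (max t 0) ^ (1/p)) := fun a b hab =>
    Real.rpow_le_rpow (le_max_right _ _) (max_le_max hab le_rfl) hip.le
  have hcont : ContinuousAt (fun t : ℝ => (max t 0) ^ (1/p)) (sInf S) := by
    exact (Real.continuousAt_rpow_const _ _ (Or.inr hip.le)).comp
      ((continuous_id.max continuous_const).continuousAt)
  have hmap := hmono.map_csInf_of_continuousAt hcont hSne hSbdd
  have hSInfnonneg : 0 ≤ sInf S := le_csInf hSne hSnonneg
  have hAinf : sInf A = (sInf S) ^ (1/p) := by
    rw [hA, ← hmap]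
    rw [max_eq_left hSInfnonneg]
  rw [hAinf, one_div, Real.rpow_inv_rpow hSInfnonneg hp0.ne', hSB]
end
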